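/- Let 0 < R < π/2 and define the two tangent spherical cap profiles ρ₊(θ) = (cos θ + √(cos²θ − cos²R))/cos R and ρ₋(θ) = (cos θ − √(cos²θ − cos²R))/cos R for θ ∈ [0,R]. Then both have the same scale-invariant resistance: 2π ∫₀^R ρ±(θ)² sin θ / (ρ±(θ)² + ρ±'(θ)²) dθ = 2π (cos R − cos 2R) / (3(1 + cos R)). -/

import Mathlib

open Real Filter Set

/-- The scale-invariant resistance of the rotationally symmetric radial graph
`ρ = ρ(θ)`, `θ ∈ [0,R]`: `R₁[ρ] = 2π ∫₀ᴿ ρ² sin θ / (ρ² + ρ'(θ)²) dθ`. -/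
noncomputable def res1Rho (R : ℝ) (ρ : ℝ → ℝ) : ℝ :=
  2 * π * ∫ θ in (0:ℝ)..R, ρ θ ^ 2 * Real.sin θ / (ρ θ ^ 2 + (deriv ρ θ) ^ 2)

lemma alg (c u v s ε : ℝ) (hc : c ≠ 0) (hs : 0 < s) (hs2 : s^2 = u^2 - c^2)
    (hu : 0 < u) (hv : s^2 + v^2 = 1 - c^2) (hε : ε = 1 ∨ ε = -1) :
    ((u + ε*s)/c)^2 * v / (((u + ε*s)/c)^2 + ((-v + ε*(1/(2*s)*(2*u*(-v))))/c)^2)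
      = v * (u^2 - c^2) / (1 - c^2) := by
  have hε2 : ε^2 = 1 := by rcases hε with h | h <;> rw [h] <;> norm_num
  have hA : u + ε*s ≠ 0 := by
    intro h
    have h2 : (u + ε*s) * (u - ε*s) = c^2 := by linear_combination -hs2 - s^2 * hε2
    rw [h, zero_mul] at h2
    exact hc (by nlinarith)
  have h1c : 1 - c^2 ≠ 0 := by nlinarith [hs.le, sq_nonneg v]
  have hD : ((u + ε*s)/c)^2 + ((-v + ε*(1/(2*s)*(2*u*(-v))))/c)^2
      = (u + ε*s)^2 * (1-c^2) / (s^2 * c^2) := by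
    rw [← hv]
    field_simp
    rcases hε with h | h <;> rw [h] <;> ring
  rw [hD, ← hs2]
  field_simp

lemma key (R : ℝ) (hR0 : 0 < R) (hR : R < π / 2) (ε : ℝ) (hε : ε = 1 ∨ ε = -1) :
    res1Rho R (fun θ =>
        (Real.cos θ + ε * Real.sqrt (Real.cos θ ^ 2 - Real.cos R ^ 2)) / Real.cos R) =
      2 * π * (Real.cos R - Real.cos (2 * R)) / (3 * (1 + Real.cos R)) := by
  have hpi : (0:ℝ) < π := Real.pi_pos
  set c := Real.cos R with hcdef
  have hc0 : 0 < c := Real.cos_pos_of_mem_Ioo ⟨by linarith, hR⟩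
  have hc1 : c < 1 := by
    have := Real.cos_lt_cos_of_nonneg_of_le_pi (le_refl 0) (by linarith) hR0
    simpa using this
  have h1c : (1:ℝ) - c^2 ≠ 0 := by nlinarith
  set ρ : ℝ → ℝ := fun θ =>
    (Real.cos θ + ε * Real.sqrt (Real.cos θ ^ 2 - c ^ 2)) / c with hρdef
  -- pointwise equality of the integrand on Ioo 0 R
  have hpt : ∀ θ ∈ Ioo (0:ℝ) R,
      ρ θ ^ 2 * Real.sin θ / (ρ θ ^ 2 + (deriv ρ θ) ^ 2)
        = Real.sin θ * (Real.cos θ ^ 2 - c ^ 2) / (1 - c ^ 2) := by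
    intro θ hθ
    obtain ⟨hθ0, hθR⟩ := hθ
    have hcosθ : c < Real.cos θ :=
      Real.cos_lt_cos_of_nonneg_of_le_pi hθ0.le (by linarith) hθR
    have hu : 0 < Real.cos θ := lt_trans hc0 hcosθ
    have hpos : 0 < Real.cos θ ^ 2 - c ^ 2 := by nlinarith
    set s := Real.sqrt (Real.cos θ ^ 2 - c ^ 2) with hsdef
    have hs : 0 < s := Real.sqrt_pos.mpr hpos
    have hs2 : s ^ 2 = Real.cos θ ^ 2 - c ^ 2 := Real.sq_sqrt hpos.le
    have hd : HasDerivAt ρ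
        ((-Real.sin θ + ε * (1/(2*s) * (2 * Real.cos θ * (-Real.sin θ)))) / c) θ := by
      have h1 : HasDerivAt Real.cos (-Real.sin θ) θ := Real.hasDerivAt_cos θ
      have h2 : HasDerivAt (fun x => Real.cos x ^ 2 - c ^ 2)
          (2 * Real.cos θ * (-Real.sin θ)) θ := by
        have := (h1.pow 2).sub_const (c ^ 2)
        simpa using this
      have h3 := ((Real.hasDerivAt_sqrt (ne_of_gt hpos)).comp θ h2).const_mul ε
      exact (h1.add h3).div_const c
    rw [hd.deriv]
    have hv : s ^ 2 + Real.sin θ ^ 2 = 1 - c ^ 2 := by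
      rw [hs2]
      nlinarith [Real.sin_sq_add_cos_sq θ]
    have := alg c (Real.cos θ) (Real.sin θ) s ε (ne_of_gt hc0) hs hs2 hu hv hε
    simpa [hρdef] using this
  have hsR : 0 < Real.sin R := Real.sin_pos_of_pos_of_lt_pi hR0 (by linarith)
  -- rewrite the integral
  have hcong : (∫ θ in (0:ℝ)..R, ρ θ ^ 2 * Real.sin θ / (ρ θ ^ 2 + (deriv ρ θ) ^ 2))
      = ∫ θ in (0:ℝ)..R, Real.sin θ * (Real.cos θ ^ 2 - c ^ 2) / (1 - c ^ 2) := by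
    apply intervalIntegral.integral_congr_ae
    have hae : ∀ᵐ (θ : ℝ), θ ∉ ({R} : Set ℝ) :=
      MeasureTheory.measure_eq_zero_iff_ae_notMem.mp (MeasureTheory.measure_singleton R)
    filter_upwards [hae] with θ hθ hmem
    rw [Set.uIoc_of_le hR0.le] at hmem
    exact hpt θ ⟨hmem.1, lt_of_le_of_ne hmem.2 (by simpa using hθ)⟩
  -- FTC
  have hint : (∫ θ in (0:ℝ)..R, Real.sin θ * (Real.cos θ ^ 2 - c ^ 2) / (1 - c ^ 2))
      = (-(Real.cos R)^3/3 + c^2 * Real.cos R) / (1 - c ^ 2) - (-(1:ℝ)^3/3 + c^2 * 1) / (1 - c ^ 2) := by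
    have hF : ∀ θ ∈ Set.uIcc (0:ℝ) R,
        HasDerivAt (fun x => (-(Real.cos x)^3/3 + c^2 * Real.cos x) / (1 - c^2))
          (Real.sin θ * (Real.cos θ ^ 2 - c ^ 2) / (1 - c ^ 2)) θ := by
      intro θ _
      have h1 : HasDerivAt Real.cos (-Real.sin θ) θ := Real.hasDerivAt_cos θ
      have h := ((((h1.pow 3).neg).div_const 3).add (h1.const_mul (c^2))).div_const (1 - c^2)
      refine h.congr_deriv ?_
      push_cast
      ring
    have hcont : IntervalIntegrable
        (fun θ => Real.sin θ * (Real.cos θ ^ 2 - c ^ 2) / (1 - c ^ 2))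
        MeasureTheory.volume 0 R := by
      apply Continuous.intervalIntegrable
      fun_prop
    have := intervalIntegral.integral_eq_sub_of_hasDerivAt hF hcont
    simpa using this
  unfold res1Rho
  rw [hcong, hint, Real.cos_two_mul]
  have h1cR : (1:ℝ) + c ≠ 0 := by positivity
  field_simp
  ring

/-- The two tangent spherical caps
`ρ±(θ) = (cos θ ± √(cos²θ − cos²R))/cos R` have the same scale-invariant
resistance, equal to `2π (cos R − cos 2R)/(3(1 + cos R))`. -/
theorem stmt_2 (R : ℝ) (hR0 : 0 < R) (hR : R < π / 2) :
    res1Rho R (fun θ =>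
        (Real.cos θ + Real.sqrt (Real.cos θ ^ 2 - Real.cos R ^ 2)) / Real.cos R) =
      2 * π * (Real.cos R - Real.cos (2 * R)) / (3 * (1 + Real.cos R)) ∧
    res1Rho R (fun θ =>
        (Real.cos θ - Real.sqrt (Real.cos θ ^ 2 - Real.cos R ^ 2)) / Real.cos R) =
      2 * π * (Real.cos R - Real.cos (2 * R)) / (3 * (1 + Real.cos R)) := by
  constructor
  · have := key R hR0 hR 1 (Or.inl rfl)
    simpa using this
  · have := key R hR0 hR (-1) (Or.inr rfl)
    have heq : (fun θ =>
        (Real.cos θ + (-1) * Real.sqrt (Real.cos θ ^ 2 - Real.cos R ^ 2)) / Real.cos R)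
      = (fun θ =>
        (Real.cos θ - Real.sqrt (Real.cos θ ^ 2 - Real.cos R ^ 2)) / Real.cos R) := by
      funext θ; ring
    rwa [heq] at this
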